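/- LID under a smooth monotone reparametrization of distances: if g : [0, ∞) → [0, ∞) is continuously differentiable with g(0) = 0, g'(0) = a > 0, and F has ID*_F = d with F continuous and F(r) → 0 as r → 0⁺, then G(r) = F(g(r)) satisfies ID*_G = d. -/

import Mathlib

/-!
Near `0⁺` the reparametrization `g` maps `(0, ε)` into `(0, R)` and `g r / r → g'(0) = a`.
By the chain rule `ID_{F∘g}(r) = ID_F(g r) · g'(r) / (g r / r)`, and the second factor tends
to `a / a = 1` because `g'` is continuous at `0`.
-/

open Set Filter Topology

noncomputable def localIntrinsicDim (F : ℝ → ℝ) (r : ℝ) : ℝ := r * deriv F r / F r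

lemma HasDerivAt.tendsto_div_self_nhdsGT_zero {g : ℝ → ℝ} {a : ℝ} (hga : HasDerivAt g a 0)
    (hg0 : g 0 = 0) : Tendsto (fun r => g r / r) (𝓝[>] 0) (𝓝 a) := by
  simpa [hg0, inv_mul_eq_div] using hga.tendsto_slope_zero_right

lemma HasDerivAt.tendsto_nhdsGT_zero {g : ℝ → ℝ} {a : ℝ} (hga : HasDerivAt g a 0)
    (hg0 : g 0 = 0) (ha : 0 < a) : Tendsto g (𝓝[>] 0) (𝓝[>] 0) := by
  refine tendsto_nhdsWithin_iff.mpr ⟨?_, ?_⟩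
  · simpa [hg0] using hga.continuousAt.tendsto.mono_left nhdsWithin_le_nhds
  · filter_upwards [(hga.tendsto_div_self_nhdsGT_zero hg0).eventually (eventually_gt_nhds ha),
      self_mem_nhdsWithin] with r hslope hr
    simpa using (div_pos_iff_of_pos_right hr).mp hslope

lemma localIntrinsicDim_comp {F g : ℝ → ℝ} {r : ℝ} (hF : DifferentiableAt ℝ F (g r))
    (hg : DifferentiableAt ℝ g r) (hgr : g r ≠ 0) :
    localIntrinsicDim (F ∘ g) r = localIntrinsicDim F (g r) * (deriv g r / (g r / r)) := by
  rw [localIntrinsicDim, localIntrinsicDim, deriv_comp r hF hg, Function.comp_apply]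
  field_simp

theorem tendsto_localIntrinsicDim_comp {F g : ℝ → ℝ} {a d : ℝ}
    (hlid : Tendsto (localIntrinsicDim F) (𝓝[>] 0) (𝓝 d))
    (hF : ∀ᶠ x in 𝓝[>] 0, DifferentiableAt ℝ F x) (hg : ∀ᶠ r in 𝓝[>] 0, DifferentiableAt ℝ g r)
    (hga : HasDerivAt g a 0) (hg0 : g 0 = 0) (ha : 0 < a)
    (hg' : Tendsto (deriv g) (𝓝[>] 0) (𝓝 a)) :
    Tendsto (localIntrinsicDim (F ∘ g)) (𝓝[>] 0) (𝓝 d) := by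
  have hgt := hga.tendsto_nhdsGT_zero hg0 ha
  have hlim : Tendsto (fun r => localIntrinsicDim F (g r) * (deriv g r / (g r / r)))
      (𝓝[>] 0) (𝓝 (d * (a / a))) :=
    (hlid.comp hgt).mul (hg'.div (hga.tendsto_div_self_nhdsGT_zero hg0) ha.ne')
  rw [div_self ha.ne', mul_one] at hlim
  refine hlim.congr' ?_
  filter_upwards [hgt.eventually hF, hg, hgt.eventually self_mem_nhdsWithin] with r hFr hgr hpos
  exact (localIntrinsicDim_comp hFr hgr (ne_of_gt hpos)).symm

theorem lid_reparametrization_general (F g : ℝ → ℝ) (R d a : ℝ) (hR : 0 < R) (ha : 0 < a)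
    (hF : ContDiffOn ℝ 1 F (Ioo 0 R))
    (hlid : Tendsto (fun r => r * deriv F r / F r) (nhdsWithin 0 (Ioi 0)) (nhds d))
    (hg : ContDiff ℝ 1 g) (hg0 : g 0 = 0) (hg' : deriv g 0 = a) :
    Tendsto (fun r => r * deriv (fun x => F (g x)) r / F (g r))
      (nhdsWithin 0 (Ioi 0)) (nhds d) := by
  have hgd : Differentiable ℝ g := hg.differentiable one_ne_zero
  have hga : HasDerivAt g a 0 := hg' ▸ (hgd 0).hasDerivAt
  have hFd : ∀ᶠ x in 𝓝[>] 0, DifferentiableAt ℝ F x := by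
    filter_upwards [Ioo_mem_nhdsGT hR] with x hx
    exact (hF.differentiableOn one_ne_zero x hx).differentiableAt (Ioo_mem_nhds hx.1 hx.2)
  have hg'lim : Tendsto (deriv g) (𝓝[>] 0) (𝓝 a) :=
    hg' ▸ (hg.continuous_deriv le_rfl).continuousAt.tendsto.mono_left nhdsWithin_le_nhds
  exact tendsto_localIntrinsicDim_comp hlid hFd (Eventually.of_forall hgd) hga hg0 ha hg'lim

theorem lid_reparametrization (F g : ℝ → ℝ) (R d a : ℝ) (hR : 0 < R) (ha : 0 < a)
    (hF : ContDiffOn ℝ 1 F (Ioo 0 R)) (hFpos : ∀ r ∈ Ioo (0:ℝ) R, 0 < F r)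
    (hF0 : Tendsto F (nhdsWithin 0 (Ioi 0)) (nhds 0))
    (hlid : Tendsto (fun r => r * deriv F r / F r) (nhdsWithin 0 (Ioi 0)) (nhds d))
    (hg : ContDiff ℝ 1 g) (hg0 : g 0 = 0) (hg' : deriv g 0 = a) :
    Tendsto (fun r => r * deriv (fun x => F (g x)) r / F (g r))
      (nhdsWithin 0 (Ioi 0)) (nhds d) :=
  lid_reparametrization_general F g R d a hR ha hF hlid hg hg0 hg'
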